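/- arXiv:1204.4138 — 2 statements merged into one kernel-verified Lean document; each statement's English description precedes it below -/
import Mathlib

section
/- Let W : ℝ^n → ℝ be C², convex, with ∇²W(x) ≥ K·Id (as quadratic forms) for all |x| ≥ R, where K > 0. Then for all x, y ∈ ℝ^n with |x| ≥ 2R or |y| ≥ 2R, one has (∇W(x) - ∇W(y)) · (x - y) ≥ (K/3) |x - y|². -/
/-!
Along the segment `t ↦ y + t • (x - y)`, the directional derivative `g t = DW(·)(x - y)` is
monotone by convexity, and its derivative, the Hessian on `(x - y, x - y)`, is at least
`K ‖x - y‖²` wherever the segment lies outside the ball of radius `R`. By Cauchy–Schwarz the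
parameters where the segment is inside the ball form an interval of length at most
`2R / ‖x - y‖`; this is at most `2/3` when `‖x - y‖ ≥ 3R`, and otherwise the third of the segment
next to the endpoint of norm `≥ 2R` stays outside the ball. Hence `g 1 - g 0 ≥ K ‖x - y‖² / 3`.
-/

open RealInnerProductSpace Set AffineMap

theorem Monotone.mul_sub_le_image_sub_of_le_deriv_outside {f f' : ℝ → ℝ} {C p q c d : ℝ}
    (hf : Monotone f) (hf' : ∀ t, HasDerivAt f (f' t) t) (hC : 0 ≤ C) (hpq : p ≤ q)
    (hcd : c ≤ d) (hbound : ∀ t ∈ Ioo p q, t < c ∨ d < t → C ≤ f' t) :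
    C * ((q - p) - (d - c)) ≤ f q - f p := by
  have hmvt : ∀ r s, r ≤ s → (∀ t ∈ Ioo r s, C ≤ f' t) → C * (s - r) ≤ f s - f r :=
    fun r s hrs hC' => (convex_Icc r s).mul_sub_le_image_sub_of_le_deriv
      (fun t _ => (hf' t).continuousAt.continuousWithinAt)
      (fun t _ => (hf' t).differentiableAt.differentiableWithinAt)
      (fun t ht => by rw [interior_Icc] at ht; rw [(hf' t).deriv]; exact hC' t ht)
      r (left_mem_Icc.2 hrs) s (right_mem_Icc.2 hrs) hrs
  set a := min (max c p) q
  set b := min (max d p) q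
  have hleft : C * (a - p) ≤ f a - f p :=
    hmvt p a (by grind) fun t ht => hbound t ⟨ht.1, by grind⟩ (.inl (by grind))
  have hright : C * (q - b) ≤ f q - f b :=
    hmvt b q (by grind) fun t ht => hbound t ⟨by grind, ht.2⟩ (.inr (by grind))
  have hmid : f a ≤ f b := hf (by grind)
  have hgap : C * (b - a) ≤ C * (d - c) := mul_le_mul_of_nonneg_left (by grind) hC
  linarith

section
variable {E : Type*} [NormedAddCommGroup E] [InnerProductSpace ℝ E]

theorem abs_inner_add_mul_le_norm_lineMap_mul (x y : E) (t : ℝ) :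
    |⟪y, x - y⟫ + t * ‖x - y‖ ^ 2| ≤ ‖lineMap y x t‖ * ‖x - y‖ := by
  have h : ⟪lineMap y x t, x - y⟫ = ⟪y, x - y⟫ + t * ‖x - y‖ ^ 2 := by
    rw [lineMap_apply_module', inner_add_left, real_inner_smul_left, real_inner_self_eq_norm_sq]
    ring
  exact h ▸ abs_real_inner_le_norm _ _

theorem exists_gap_le_norm_lineMap {R : ℝ} (hR : 0 ≤ R) {x y : E}
    (hxy : 2 * R ≤ ‖x‖ ∨ 2 * R ≤ ‖y‖) :
    ∃ c d, c ≤ d ∧ d - c ≤ 2 / 3 ∧ ∀ t ∈ Ioo (0 : ℝ) 1, t < c ∨ d < t → R ≤ ‖lineMap y x t‖ := by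
  set L := ‖x - y‖
  by_cases hL : 3 * R < L
  · have hL0 : 0 < L := by linarith
    have hRL : 0 ≤ R * L := by positivity
    -- `[c, d]` is centred at the parameter of the point of the line closest to `0`
    refine ⟨(-⟪y, x - y⟫ - R * L) / L ^ 2, (-⟪y, x - y⟫ + R * L) / L ^ 2,
      by gcongr; linarith, ?_, fun t _ ht => ?_⟩
    · rw [← sub_div, div_le_iff₀ (by positivity)]
      nlinarith
    have hfar : R * L ≤ |⟪y, x - y⟫ + t * L ^ 2| := by
      rcases ht with ht | ht
      · rw [lt_div_iff₀ (by positivity)] at ht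
        exact le_abs.2 (.inr (by linarith))
      · rw [div_lt_iff₀ (by positivity)] at ht
        exact le_abs.2 (.inl (by linarith))
    exact le_of_mul_le_mul_right (hfar.trans (abs_inner_add_mul_le_norm_lineMap_mul x y t)) hL0
  rcases hxy with hx | hy
  · refine ⟨0, 2 / 3, by norm_num, by norm_num, fun t ht ht' => ?_⟩
    have hdist : ‖x - lineMap y x t‖ = (1 - t) * L := by
      rw [← dist_eq_norm, dist_comm, dist_lineMap_right, dist_comm, dist_eq_norm,
        Real.norm_of_nonneg (by linarith [ht.2])]
    have htri := norm_sub_norm_le x (lineMap y x t)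
    rcases ht' with ht' | ht' <;> nlinarith [ht.1, ht.2]
  · refine ⟨1 / 3, 1, by norm_num, by norm_num, fun t ht ht' => ?_⟩
    have hdist : ‖y - lineMap y x t‖ = t * L := by
      rw [← dist_eq_norm, dist_comm, dist_lineMap_left, dist_comm, dist_eq_norm,
        Real.norm_of_nonneg ht.1.le]
    have htri := norm_sub_norm_le y (lineMap y x t)
    rcases ht' with ht' | ht' <;> nlinarith [ht.1, ht.2]
end

section
variable {E : Type*} [NormedAddCommGroup E] [NormedSpace ℝ E] {W : E → ℝ}

theorem ContDiff.hasDerivAt_fderiv_lineMap_apply (hW : ContDiff ℝ 2 W) (x y : E) (t : ℝ) :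
    HasDerivAt (fun s : ℝ => fderiv ℝ W (AffineMap.lineMap y x s) (x - y))
      (iteratedFDeriv ℝ 2 W (AffineMap.lineMap y x t) ![x - y, x - y]) t := by
  have hW' : Differentiable ℝ (fderiv ℝ W) :=
    (hW.fderiv_right le_rfl).differentiable one_ne_zero
  rw [iteratedFDeriv_two_apply]
  simpa using ((hW' _).hasFDerivAt.comp_hasDerivAt t hasDerivAt_lineMap).clm_apply
    (hasDerivAt_const t (x - y))

theorem ConvexOn.monotone_fderiv_lineMap_apply (hconv : ConvexOn ℝ univ W)
    (hW : Differentiable ℝ W) (x y : E) :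
    Monotone fun t : ℝ => fderiv ℝ W (lineMap y x t) (x - y) := by
  have hline : ∀ t, HasDerivAt (W ∘ lineMap y x) (fderiv ℝ W (lineMap y x t) (x - y)) t :=
    fun t => (hW _).hasFDerivAt.comp_hasDerivAt t hasDerivAt_lineMap
  have hmono := (hconv.comp_affineMap (lineMap y x)).monotoneOn_deriv
    fun t _ => (hline t).differentiableAt
  intro s t hst
  simpa only [(hline _).deriv] using hmono (mem_univ s) (mem_univ t) hst
end

/-- If `W` is `C²`, convex, with `∇²W(x) ≥ K·Id` for `|x| ≥ R` (`K > 0`), then for all `x, y`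
with `|x| ≥ 2R` or `|y| ≥ 2R`, `(∇W(x) - ∇W(y)) · (x - y) ≥ (K/3) |x - y|²`. -/
theorem grad_monotonicity_outside_ball (n : ℕ)
    (W : EuclideanSpace ℝ (Fin n) → ℝ) (K R : ℝ) (hK : 0 < K) (hR : 0 ≤ R)
    (hW : ContDiff ℝ 2 W) (hWconv : ConvexOn ℝ Set.univ W)
    (hhess : ∀ x, R ≤ ‖x‖ → ∀ v : EuclideanSpace ℝ (Fin n),
      K * ‖v‖ ^ 2 ≤ iteratedFDeriv ℝ 2 W x ![v, v])
    (x y : EuclideanSpace ℝ (Fin n)) (hxy : 2 * R ≤ ‖x‖ ∨ 2 * R ≤ ‖y‖) :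
    K / 3 * ‖x - y‖ ^ 2 ≤ ⟪gradient W x - gradient W y, x - y⟫ := by
  obtain ⟨c, d, hcd, hgap, hout⟩ := exists_gap_le_norm_lineMap hR hxy
  have hincr := (hWconv.monotone_fderiv_lineMap_apply (hW.differentiable two_ne_zero) x y
    ).mul_sub_le_image_sub_of_le_deriv_outside (hW.hasDerivAt_fderiv_lineMap_apply x y)
    (by positivity) zero_le_one hcd fun t ht hcdt => hhess _ (hout t ht hcdt) _
  simp only [lineMap_apply_one, lineMap_apply_zero] at hincr
  calc K / 3 * ‖x - y‖ ^ 2 ≤ K * ‖x - y‖ ^ 2 * (1 - 0 - (d - c)) := by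
        nlinarith [mul_nonneg hK.le (sq_nonneg ‖x - y‖)]
    _ ≤ ⟪gradient W x - gradient W y, x - y⟫ := by
        rwa [inner_sub_left, inner_gradient_left, inner_gradient_left]
end

section
/- Let f : [0, ∞) → [0, ∞) be absolutely continuous and satisfy f'(t) ≤ -C ε^p (2 f(t) - ε²) for almost every t > 0, for all ε > 0, where C, p > 0. Then f(t) ≤ (f(0)^{-p/2} + c t)^{-2/p} for an explicit constant c > 0 depending only on C and p. -/
/-!
Choosing `ε² = f t` in the family of inequalities gives `f' ≤ -C f ^ (1 + β)` a.e., `β = p / 2`.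
Integrated, this makes `f` a subsolution of `y' = -C y ^ (1 + β)`, whose solution from `f 0` is
`y t = (f 0 ^ (-β) + β C t) ^ (-1/β)`. Since `x ↦ -C x ^ (1 + β)` is nonincreasing on `[0, ∞)`,
`f - y` cannot increase on an interval where `f > y`; as `f 0 = y 0`, continuous induction
gives `f ≤ y`.
-/

open MeasureTheory intervalIntegral Set Filter Topology

lemma le_neg_mul_rpow_of_forall_rat_le {C p a b : ℝ} (hp : 0 < p) (ha : 0 ≤ a)
    (h : ∀ q : ℚ, 0 < (q : ℝ) → b ≤ -C * (q : ℝ) ^ p * (2 * a - (q : ℝ) ^ 2)) :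
    b ≤ -C * a ^ (p / 2 + 1) := by
  obtain ⟨u, -, hu_gt, hu_lim⟩ := Real.exists_seq_rat_strictAnti_tendsto (√a)
  have hg : Continuous fun ε : ℝ => -C * ε ^ p * (2 * a - ε ^ 2) :=
    (continuous_const.mul (Real.continuous_rpow_const hp.le)).mul (by fun_prop)
  have hb : b ≤ -C * √a ^ p * (2 * a - √a ^ 2) :=
    ge_of_tendsto' ((hg.tendsto _).comp hu_lim)
      fun n => h (u n) ((Real.sqrt_nonneg a).trans_lt (hu_gt n))
  rw [Real.sq_sqrt ha, Real.sqrt_eq_rpow, ← Real.rpow_mul ha] at hb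
  rw [Real.rpow_add' ha (by positivity), Real.rpow_one]
  exact hb.trans_eq (by ring_nf)

lemma ae_le_neg_mul_rpow_of_forall_ae_le {α : Type*} [MeasurableSpace α] {μ : Measure α}
    {f f' : α → ℝ} {C p : ℝ} (hp : 0 < p) (hf : ∀ᵐ t ∂μ, 0 ≤ f t)
    (h : ∀ ε : ℝ, 0 < ε → ∀ᵐ t ∂μ, f' t ≤ -C * ε ^ p * (2 * f t - ε ^ 2)) :
    ∀ᵐ t ∂μ, f' t ≤ -C * f t ^ (p / 2 + 1) := by
  -- The exceptional null set depends on `ε`, so only countably many `ε` can be used at once.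
  have hrat : ∀ᵐ t ∂μ, ∀ q : ℚ, 0 < (q : ℝ) →
      f' t ≤ -C * (q : ℝ) ^ p * (2 * f t - (q : ℝ) ^ 2) := by
    refine ae_all_iff.2 fun q => ?_
    by_cases hq : 0 < (q : ℝ)
    · filter_upwards [h q hq] with t ht using fun _ => ht
    · exact Eventually.of_forall fun _ hq' => absurd hq' hq
  filter_upwards [hf, hrat] with t ht hq using le_neg_mul_rpow_of_forall_rat_le hp ht hq

lemma sub_le_integral_of_eq_add_integral {f f' g : ℝ → ℝ}
    (hint : ∀ t, 0 < t → IntervalIntegrable f' volume 0 t)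
    (hftc : ∀ t, 0 ≤ t → f t = f 0 + ∫ u in (0:ℝ)..t, f' u)
    (hle : ∀ᵐ u ∂volume.restrict (Ioi 0), f' u ≤ g u) {s t : ℝ} (hs : 0 ≤ s) (hst : s ≤ t)
    (hg : IntervalIntegrable g volume s t) :
    f t - f s ≤ ∫ u in s..t, g u := by
  have hint₀ : ∀ t, 0 ≤ t → IntervalIntegrable f' volume 0 t := fun t ht =>
    ht.eq_or_lt.elim (fun h => h ▸ IntervalIntegrable.refl) (hint t)
  have ht : 0 ≤ t := hs.trans hst
  calc f t - f s = ∫ u in s..t, f' u := by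
        rw [hftc t ht, hftc s hs, ← integral_interval_sub_left (hint₀ t ht) (hint₀ s hs)]
        ring
    _ ≤ ∫ u in s..t, g u := by
        refine integral_mono_ae_restrict hst ((hint₀ s hs).symm.trans (hint₀ t ht)) hg ?_
        rw [← Measure.restrict_congr_set Ioc_ae_eq_Icc]
        exact ae_restrict_of_ae_restrict_of_subset (fun x hx => hs.trans_lt hx.1) hle

theorem le_of_sub_le_sub_of_forall_lt_Ioc {α : Type*} [ConditionallyCompleteLinearOrder α]
    [TopologicalSpace α] [OrderTopology α] {u v : α → ℝ} {a b : α} (hab : a ≤ b)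
    (hu : ContinuousOn u (Icc a b)) (hv : ContinuousOn v (Icc a b)) (ha : u a ≤ v a)
    (hstep : ∀ s ∈ Ico a b, (∀ r ∈ Ioc s b, v r < u r) → u b - u s ≤ v b - v s) :
    u b ≤ v b := by
  have hclosed : IsClosed ({x | u x - v x ≤ 0} ∩ Icc a b) := by
    rw [inter_comm]
    exact (hu.sub hv).preimage_isClosed_of_isClosed isClosed_Icc isClosed_Iic
  refine sub_nonpos.1 <| hclosed.mem_of_ge_of_forall_exists_gt (sub_nonpos.2 ha) hab ?_
  rintro s ⟨hs, hsI⟩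
  by_contra hempty
  have hlt : ∀ r ∈ Ioc s b, v r < u r := fun r hr =>
    sub_pos.1 <| not_le.1 fun hr' => hempty ⟨r, hr', hr⟩
  have hb : u b - v b ≤ 0 := by linarith [hstep s hsI hlt, show u s - v s ≤ 0 from hs]
  exact hempty ⟨b, hb, hsI.2, le_rfl⟩

lemma intervalIntegrable_const_mul_rpow {f : ℝ → ℝ} {a r s t : ℝ} (hr : 0 ≤ r)
    (hf : ContinuousOn f (Ici 0)) (hs : 0 ≤ s) (hst : s ≤ t) :
    IntervalIntegrable (fun u => a * f u ^ r) volume s t := by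
  have hsub : uIcc s t ⊆ Ici 0 := by
    rw [uIcc_of_le hst]; exact fun u hu => hs.trans hu.1
  exact (((hf.mono hsub).rpow_const fun _ _ => Or.inr hr).const_smul a).intervalIntegrable

lemma hasDerivAt_rpow_neg_inv {A C β t : ℝ} (hβ : 0 < β) (ht : 0 < A + β * C * t) :
    HasDerivAt (fun t => (A + β * C * t) ^ (-β⁻¹))
      (-C * ((A + β * C * t) ^ (-β⁻¹)) ^ (β + 1)) t := by
  have h := (((hasDerivAt_id' t).const_mul (β * C)).const_add A).rpow_const
    (p := -β⁻¹) (Or.inl ht.ne')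
  convert h using 1
  rw [← Real.rpow_mul ht.le]
  field_simp
  ring_nf

theorem le_rpow_of_sub_le_integral {f : ℝ → ℝ} {C β : ℝ} (hC : 0 ≤ C) (hβ : 0 < β)
    (hf₀ : 0 < f 0) (hcont : ContinuousOn f (Ici 0))
    (hf : ∀ s t, 0 ≤ s → s ≤ t → f t - f s ≤ ∫ u in s..t, -C * f u ^ (β + 1))
    {t : ℝ} (ht : 0 ≤ t) :
    f t ≤ (f 0 ^ (-β) + β * C * t) ^ (-β⁻¹) := by
  set y : ℝ → ℝ := fun t => (f 0 ^ (-β) + β * C * t) ^ (-β⁻¹) with hy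
  have hpos : ∀ t, 0 ≤ t → 0 < f 0 ^ (-β) + β * C * t := fun t ht =>
    add_pos_of_pos_of_nonneg (Real.rpow_pos_of_pos hf₀ _) (by positivity)
  have hderiv : ∀ t, 0 ≤ t → HasDerivAt y (-C * y t ^ (β + 1)) t := fun t ht =>
    hasDerivAt_rpow_neg_inv hβ (hpos t ht)
  have hy_cont : ContinuousOn y (Ici 0) := fun t ht =>
    (hderiv t ht).continuousAt.continuousWithinAt
  have hy₀ : y 0 = f 0 := by
    simp only [hy, mul_zero, add_zero]
    rw [← Real.rpow_mul hf₀.le, neg_mul_neg, mul_inv_cancel₀ hβ.ne', Real.rpow_one]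
  have hIcc : Icc 0 t ⊆ Ici 0 := Icc_subset_Ici_self
  refine le_of_sub_le_sub_of_forall_lt_Ioc ht (hcont.mono hIcc) (hy_cont.mono hIcc) hy₀.ge ?_
  intro s ⟨hs, hst⟩ hlt
  have hrpow : ∀ g : ℝ → ℝ, ContinuousOn g (Ici 0) →
      IntervalIntegrable (fun u => -C * g u ^ (β + 1)) volume s t := fun g hg =>
    intervalIntegrable_const_mul_rpow (by positivity) hg hs hst.le
  calc f t - f s ≤ ∫ u in s..t, -C * f u ^ (β + 1) := hf s t hs hst.le
    _ ≤ ∫ u in s..t, -C * y u ^ (β + 1) := by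
        refine integral_mono_on_of_le_Ioo hst.le (hrpow f hcont) (hrpow y hy_cont) fun r hr => ?_
        have hyr : 0 ≤ y r := Real.rpow_nonneg (hpos r (hs.trans hr.1.le)).le _
        exact mul_le_mul_of_nonpos_left
          (Real.rpow_le_rpow hyr (hlt r (Ioo_subset_Ioc_self hr)).le (by positivity))
          (by linarith)
    _ = y t - y s := integral_eq_sub_of_hasDerivAt
        (fun r hr => hderiv r (hs.trans (uIcc_of_le hst.le ▸ hr).1)) (hrpow y hy_cont)

/-- If `f : [0,∞) → [0,∞)` is absolutely continuous (encoded by the fundamental theorem of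
calculus representation with an a.e. derivative `f'`) and satisfies
`f'(t) ≤ -C ε^p (2 f(t) - ε²)` for a.e. `t > 0` and every `ε > 0`, with `C, p > 0`, then
`f(t) ≤ (f(0)^{-p/2} + c t)^{-2/p}` for some constant `c > 0` depending only on `C` and `p`. -/
theorem polynomial_decay_of_family_differential_ineq
    (f f' : ℝ → ℝ) (C p : ℝ) (hC : 0 < C) (hp : 0 < p)
    (hnonneg : ∀ t, 0 ≤ t → 0 ≤ f t)
    (hcont : ContinuousOn f (Set.Ici 0))
    (hint : ∀ t, 0 < t → IntervalIntegrable f' volume 0 t)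
    (hftc : ∀ t, 0 ≤ t → f t = f 0 + ∫ u in (0:ℝ)..t, f' u)
    (hineq : ∀ ε : ℝ, 0 < ε →
      ∀ᵐ t ∂(volume.restrict (Set.Ioi (0:ℝ))),
        f' t ≤ -C * ε ^ p * (2 * f t - ε ^ 2)) :
    ∃ c : ℝ, 0 < c ∧ ∀ t, 0 ≤ t →
      f t ≤ (f 0 ^ (-(p / 2)) + c * t) ^ (-(2 / p)) := by
  have hdecay : ∀ᵐ t ∂volume.restrict (Ioi 0), f' t ≤ -C * f t ^ (p / 2 + 1) :=
    ae_le_neg_mul_rpow_of_forall_ae_le hp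
      (ae_restrict_of_forall_mem measurableSet_Ioi fun t ht => hnonneg t ht.le) hineq
  have hsub : ∀ s t, 0 ≤ s → s ≤ t → f t - f s ≤ ∫ u in s..t, -C * f u ^ (p / 2 + 1) :=
    fun s t hs hst => sub_le_integral_of_eq_add_integral hint hftc hdecay hs hst
      (intervalIntegrable_const_mul_rpow (by positivity) hcont hs hst)
  refine ⟨p / 2 * C, by positivity, fun t ht => ?_⟩
  rcases (hnonneg 0 le_rfl).eq_or_lt with hf₀ | hf₀
  · have hintegral : ∫ u in (0:ℝ)..t, -C * f u ^ (p / 2 + 1) ≤ 0 := by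
      rw [intervalIntegral.integral_const_mul]
      exact mul_nonpos_of_nonpos_of_nonneg (by linarith)
        (integral_nonneg ht fun u hu => Real.rpow_nonneg (hnonneg u hu.1) _)
    have hft : f t ≤ 0 := by linarith [hsub 0 t le_rfl ht]
    exact hft.trans <| Real.rpow_nonneg
      (add_nonneg (Real.rpow_nonneg (hnonneg 0 le_rfl) _) (by positivity)) _
  · simpa only [inv_div] using
      le_rpow_of_sub_le_integral (by positivity) (by positivity) hf₀ hcont hsub ht
end
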